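/- arXiv:2602.16065 — 6 statements merged into one kernel-verified Lean document; each statement's English description precedes it below -/
import Mathlib

section
/- Gautschi's inequality: for every real x > 0 and s ∈ (0,1), x^{1-s} < Γ(x+1)/Γ(x+s) < (x+1)^{1-s}. -/
open Real

/-
Log-convexity of Γ between `u` and `u + 1`, combined with `Γ(u + 1) = u Γ(u)`, gives
`Γ(u + a) ≤ u ^ a Γ(u)` for `0 < a < 1`. With `u = x + s`, `a = 1 - s` this is the upper bound
(after enlarging `x + s` to `x + 1`); with `u = x + 1`, `a = s` it bounds `(x + s) Γ(x + s)` by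
`(x + 1) ^ s Γ(x + 1)`, and the strict weighted AM-GM inequality `x ^ (1 - s) (x + 1) ^ s < x + s`
turns this into the lower bound.
-/

namespace Real

theorem Gamma_add_le_rpow_mul_Gamma {u a : ℝ} (hu : 0 < u) (ha₀ : 0 < a) (ha₁ : a < 1) :
    Gamma (u + a) ≤ u ^ a * Gamma u := by
  have hΓ := Gamma_mul_add_mul_le_rpow_Gamma_mul_rpow_Gamma (s := u) (t := u + 1) hu
    (by linarith) (sub_pos.2 ha₁) ha₀ (sub_add_cancel 1 a)
  calc Gamma (u + a) = Gamma ((1 - a) * u + a * (u + 1)) := by ring_nf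
    _ ≤ Gamma u ^ (1 - a) * Gamma (u + 1) ^ a := hΓ
    _ = u ^ a * Gamma u := by
      rw [Gamma_add_one hu.ne', mul_rpow hu.le (Gamma_pos_of_pos hu).le, mul_left_comm,
        ← rpow_add (Gamma_pos_of_pos hu), sub_add_cancel, rpow_one]

theorem rpow_mul_add_one_rpow_lt_add {x s : ℝ} (hx : 0 < x) (hs₀ : 0 < s) (hs₁ : s < 1) :
    x ^ (1 - s) * (x + 1) ^ s < x + s := by
  have hamgm := (geom_mean_lt_arith_mean2_weighted_iff_of_pos (sub_pos.2 hs₁) hs₀ hx.le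
    (by linarith : (0 : ℝ) ≤ x + 1) (sub_add_cancel 1 s)).2 (by linarith)
  linarith

theorem Gamma_add_one_div_Gamma_add_lt_rpow {x s : ℝ} (hxs : 0 < x + s) (hs₀ : 0 < s)
    (hs₁ : s < 1) : Gamma (x + 1) / Gamma (x + s) < (x + 1) ^ (1 - s) := by
  have hΓ := Gamma_pos_of_pos hxs
  rw [div_lt_iff₀ hΓ]
  calc Gamma (x + 1) = Gamma (x + s + (1 - s)) := by ring_nf
    _ ≤ (x + s) ^ (1 - s) * Gamma (x + s) :=
      Gamma_add_le_rpow_mul_Gamma hxs (by linarith) (by linarith)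
    _ < (x + 1) ^ (1 - s) * Gamma (x + s) := by gcongr

theorem rpow_lt_Gamma_add_one_div_Gamma_add {x s : ℝ} (hx : 0 < x) (hs₀ : 0 < s)
    (hs₁ : s < 1) : x ^ (1 - s) < Gamma (x + 1) / Gamma (x + s) := by
  have hxs : 0 < x + s := by linarith
  have hΓ := Gamma_pos_of_pos hxs
  have hpow : 0 < (x + 1) ^ s := rpow_pos_of_pos (by linarith) s
  rw [lt_div_iff₀ hΓ, ← mul_lt_mul_iff_of_pos_left hpow]
  calc (x + 1) ^ s * (x ^ (1 - s) * Gamma (x + s))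
      = x ^ (1 - s) * (x + 1) ^ s * Gamma (x + s) := by ring
    _ < (x + s) * Gamma (x + s) := by gcongr; exact rpow_mul_add_one_rpow_lt_add hx hs₀ hs₁
    _ = Gamma (x + 1 + s) := by rw [← Gamma_add_one hxs.ne']; ring_nf
    _ ≤ (x + 1) ^ s * Gamma (x + 1) := Gamma_add_le_rpow_mul_Gamma (by linarith) hs₀ hs₁

end Real

theorem gautschi_inequality (x s : ℝ) (hx : 0 < x) (hs : s ∈ Set.Ioo (0:ℝ) 1) :
    x ^ (1 - s) < Real.Gamma (x + 1) / Real.Gamma (x + s) ∧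
    Real.Gamma (x + 1) / Real.Gamma (x + s) < (x + 1) ^ (1 - s) :=
  ⟨rpow_lt_Gamma_add_one_div_Gamma_add hx hs.1 hs.2,
    Gamma_add_one_div_Gamma_add_lt_rpow (by linarith [hs.1]) hs.1 hs.2⟩
end

section
/- Let α ∈ (0,1) and let (d_t)_{t≥1} be a nonnegative sequence satisfying d_t ≤ A t^{-p} + ((1-α)/t) ∑_{j=1}^{t-1} d_j for all t ≥ 1 with constants A > 0 and p > α. Then there exists a constant C > 0 such that d_t ≤ C t^{-α} for all t ≥ 1. -/
open Finset

/-- Bernoulli-type: for `0 ≤ β ≤ 1` and `0 ≤ x ≤ 1`, `(1-x)^β ≤ 1 - β*x`. -/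
lemma crt_bernoulli {β x : ℝ} (hβ0 : 0 ≤ β) (hβ1 : β ≤ 1) (hx0 : 0 ≤ x) (hx1 : x ≤ 1) :
    (1 - x) ^ β ≤ 1 - β * x := by
  have := rpow_one_add_le_one_add_mul_self (s := -x) (by linarith) hβ0 hβ1
  simpa [sub_eq_add_neg, mul_neg] using this

-- Main case: `α < p < 1`.
set_option maxHeartbeats 1600000 in
lemma crt_recursion_fast_baseline_aux
    (α p A : ℝ) (hα : α ∈ Set.Ioo (0:ℝ) 1) (hA : 0 < A) (hp : α < p) (hp1 : p < 1)
    (d : ℕ → ℝ) (hnonneg : ∀ t, 0 ≤ d t)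
    (hrec : ∀ t : ℕ, 1 ≤ t →
      d t ≤ A * (t : ℝ) ^ (-p) + ((1 - α) / t) * ∑ j ∈ Finset.Icc 1 (t - 1), d j) :
    ∃ C : ℝ, 0 < C ∧ ∀ t : ℕ, 1 ≤ t → d t ≤ C * (t : ℝ) ^ (-α) := by
  obtain ⟨hα0, hα1⟩ := hα
  set c : ℝ := (p - α) / 2 with hc_def
  have hc : 0 < c := by simp only [hc_def]; linarith
  have hc1 : c < 1 := by simp only [hc_def]; linarith
  set M : ℝ := A / c with hM_def
  have hM : 0 < M := div_pos hA hc
  have hMc : M * c = A := div_mul_cancel₀ A hc.ne'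
  set t₀ : ℕ := ⌈(1:ℝ)/c⌉₊ + 2 with ht₀_def
  set S : ℕ → ℝ := fun n => ∑ j ∈ Finset.Icc 1 n, d j with hS_def
  have hSnonneg : ∀ n, 0 ≤ S n := fun n => Finset.sum_nonneg fun j _ => hnonneg j
  have hS0 : S 0 = 0 := by simp [hS_def]
  have hS_eq : ∀ n, S n = ∑ j ∈ Finset.Icc 1 n, d j := fun n => rfl
  set K : ℝ := M + S t₀ + 1 with hK_def
  have hK : 0 < K := by have := hSnonneg t₀; linarith
  clear_value c M t₀ S K
  -- key claim
  have key : ∀ n : ℕ, S n ≤ K * (n : ℝ) ^ (1 - α) - M * (n : ℝ) ^ (1 - p) := by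
    intro n
    induction n with
    | zero =>
      rw [hS0]
      rw [Nat.cast_zero, Real.zero_rpow (by linarith), Real.zero_rpow (by linarith)]
      norm_num
    | succ n ih =>
      by_cases hcase : n + 1 ≤ t₀
      · -- small case: S (n+1) ≤ S t₀ ≤ K - M ≤ RHS
        have h1 : S (n + 1) ≤ S t₀ := by
          rw [hS_eq, hS_eq]
          apply Finset.sum_le_sum_of_subset_of_nonneg
          · exact Finset.Icc_subset_Icc_right hcase
          · intro j _ _; exact hnonneg j
        have hT1 : (1:ℝ) ≤ (n + 1 : ℕ) := by exact_mod_cast Nat.one_le_iff_ne_zero.2 (Nat.succ_ne_zero n)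
        have h2 : ((n+1:ℕ):ℝ) ^ (1 - p) ≤ ((n+1:ℕ):ℝ) ^ (1 - α) :=
          Real.rpow_le_rpow_of_exponent_le hT1 (by linarith)
        have h3 : (1:ℝ) ≤ ((n+1:ℕ):ℝ) ^ (1 - p) :=
          Real.one_le_rpow hT1 (by linarith)
        have hSt0 : S t₀ ≤ K - M := by simp only [hK_def]; linarith
        calc S (n+1) ≤ S t₀ := h1
          _ ≤ (K - M) * ((n+1:ℕ):ℝ) ^ (1 - p) := by
              nlinarith [hSnonneg t₀]
          _ ≤ K * ((n+1:ℕ):ℝ) ^ (1 - α) - M * ((n+1:ℕ):ℝ) ^ (1 - p) := by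
              nlinarith
      · -- recursive case
        push_neg at hcase
        have ht₀2 : 2 ≤ t₀ := by rw [ht₀_def]; omega
        have hn1 : t₀ ≤ n := Nat.lt_succ_iff.mp hcase
        set T : ℝ := ((n+1 : ℕ) : ℝ) with hT_def
        have hT0 : (0:ℝ) < T := by positivity
        have hnT : ((n:ℕ):ℝ) = T - 1 := by rw [hT_def]; push_cast; ring
        have hTt₀ : (t₀ : ℝ) ≤ T - 1 := by rw [← hnT]; exact_mod_cast hn1
        have hT2 : (2:ℝ) ≤ T - 1 := le_trans (by exact_mod_cast ht₀2) hTt₀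
        set x : ℝ := 1 / T with hx_def
        clear_value T x
        have hx0 : 0 < x := by rw [hx_def]; positivity
        have hxc : x ≤ c := by
          rw [hx_def, div_le_iff₀ hT0]
          have h1c : (1:ℝ)/c ≤ (⌈(1:ℝ)/c⌉₊ : ℝ) := Nat.le_ceil _
          have h2 : ((⌈(1:ℝ)/c⌉₊:ℕ) : ℝ) ≤ (t₀ : ℝ) := by
            rw [ht₀_def]; push_cast; linarith
          have : 1/c ≤ T := by linarith
          calc (1:ℝ) = c * (1/c) := by field_simp
            _ ≤ c * T := by nlinarith
        have hx1 : x < 1 := lt_of_le_of_lt hxc hc1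
        have h1x : 1 - x = (T - 1) / T := by rw [hx_def]; field_simp
        have h1xpos : 0 < 1 - x := by linarith
        -- decompositions
        have hmul : T - 1 = T * (1 - x) := by rw [h1x]; field_simp
        have hrpα : (T - 1) ^ (1 - α) = T ^ (1 - α) * (1 - x) ^ (1 - α) := by
          rw [hmul, Real.mul_rpow hT0.le h1xpos.le]
        have hrpp : (T - 1) ^ (1 - p) = T ^ (1 - p) * (1 - x) ^ (1 - p) := by
          rw [hmul, Real.mul_rpow hT0.le h1xpos.le]
        -- claim A : (1-x)^(1-α) * (1 + (1-α)*x) ≤ 1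
        have bernA : (1 - x) ^ (1 - α) ≤ 1 - (1 - α) * x :=
          crt_bernoulli (by linarith) (by linarith) hx0.le hx1.le
        have claimA : (1 - x) ^ (1 - α) * (1 + (1 - α) * x) ≤ 1 := by
          have hpos : (0:ℝ) ≤ 1 + (1 - α) * x := by nlinarith
          nlinarith [mul_le_mul_of_nonneg_right bernA hpos, sq_nonneg ((1 - α) * x),
            Real.rpow_nonneg h1xpos.le (1 - α)]
        -- claim B : (1-x)^(1-p) * (1 + (1-α)*x) ≥ 1 + c*x
        have bernB : (1 - x) ^ p ≤ 1 - p * x :=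
          crt_bernoulli (by linarith) (by linarith) hx0.le hx1.le
        have hpx : 0 < 1 - p * x := by nlinarith
        have hrp_pos : 0 < (1 - x) ^ p := Real.rpow_pos_of_pos h1xpos p
        have hsplit : (1 - x) ^ (1 - p) * (1 - x) ^ p = 1 - x := by
          rw [← Real.rpow_add h1xpos, sub_add_cancel, Real.rpow_one]
        have hlb : (1 - x) / (1 - p * x) ≤ (1 - x) ^ (1 - p) := by
          rw [div_le_iff₀ hpx]
          calc (1:ℝ) - x = (1 - x) ^ (1 - p) * (1 - x) ^ p := hsplit.symm
            _ ≤ (1 - x) ^ (1 - p) * (1 - p * x) :=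
                mul_le_mul_of_nonneg_left bernB (Real.rpow_nonneg h1xpos.le _)
        have claimB : 1 + c * x ≤ (1 - x) ^ (1 - p) * (1 + (1 - α) * x) := by
          have hratio : 1 + c * x ≤ (1 - x) / (1 - p * x) * (1 + (1 - α) * x) := by
            rw [div_mul_eq_mul_div, le_div_iff₀ hpx]
            have hca : 2 * c = p - α := by rw [hc_def]; ring
            have hxx : x * x ≤ c * x := by nlinarith
            nlinarith [mul_nonneg (mul_nonneg hc.le (by linarith : (0:ℝ) ≤ p))
              (sq_nonneg x), mul_nonneg hα0.le (sq_nonneg x), sq_nonneg x]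
          refine hratio.trans ?_
          apply mul_le_mul_of_nonneg_right hlb
          nlinarith
        -- recursion step
        have hstep : S (n+1) ≤ S n * (1 + (1 - α) * x) + A * T ^ (-p) := by
          have hsum : S (n+1) = S n + d (n+1) := by
            rw [hS_eq, hS_eq]
            exact Finset.sum_Icc_succ_top (Nat.one_le_iff_ne_zero.2 (Nat.succ_ne_zero n)) d
          have hd := hrec (n+1) (Nat.le_add_left 1 n)
          simp only [Nat.add_sub_cancel] at hd
          rw [hsum]
          have hdn : d (n+1) ≤ A * T ^ (-p) + (1 - α) * x * S n := by
            rw [← hT_def, ← hS_eq n] at hd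
            have hdiv : (1 - α) / T = (1 - α) * x := by rw [hx_def]; ring
            rwa [hdiv] at hd
          nlinarith [hSnonneg n]
        have hmulpos : (0:ℝ) < 1 + (1 - α) * x := by nlinarith
        have hih : S n * (1 + (1 - α) * x) ≤
            (K * ((n:ℕ):ℝ) ^ (1 - α) - M * ((n:ℕ):ℝ) ^ (1 - p)) * (1 + (1 - α) * x) :=
          mul_le_mul_of_nonneg_right ih hmulpos.le
        rw [hnT, hrpα, hrpp] at hih
        -- A-part
        have hApart : K * (T ^ (1 - α) * (1 - x) ^ (1 - α)) * (1 + (1 - α) * x) ≤ K * T ^ (1 - α) := by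
          have hTpow : (0:ℝ) ≤ T ^ (1 - α) := Real.rpow_nonneg hT0.le _
          nlinarith [mul_le_mul_of_nonneg_left claimA (mul_nonneg hK.le hTpow)]
        -- B-part
        have hxT : T ^ (1 - p) * x = T ^ (-p) := by
          rw [hx_def, show (1:ℝ) - p = -p + 1 by ring, Real.rpow_add hT0, Real.rpow_one]
          field_simp
        have hBpart : M * T ^ (1 - p) + A * T ^ (-p) ≤
            M * (T ^ (1 - p) * (1 - x) ^ (1 - p)) * (1 + (1 - α) * x) := by
          have hTpow : (0:ℝ) ≤ T ^ (1 - p) := Real.rpow_nonneg hT0.le _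
          have h := mul_le_mul_of_nonneg_left claimB hTpow
          have : T ^ (1 - p) + A / M * T ^ (-p) ≤ T ^ (1 - p) * ((1 - x) ^ (1 - p) * (1 + (1 - α) * x)) := by
            have hAMc : A / M = c := by rw [hM_def]; field_simp
            rw [hAMc, ← hxT]
            nlinarith
          calc M * T ^ (1 - p) + A * T ^ (-p)
              = M * (T ^ (1 - p) + A / M * T ^ (-p)) := by field_simp
            _ ≤ M * (T ^ (1 - p) * ((1 - x) ^ (1 - p) * (1 + (1 - α) * x))) :=
                mul_le_mul_of_nonneg_left this hM.le
            _ = M * (T ^ (1 - p) * (1 - x) ^ (1 - p)) * (1 + (1 - α) * x) := by ring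
        calc S (n+1) ≤ S n * (1 + (1 - α) * x) + A * T ^ (-p) := hstep
          _ ≤ (K * (T ^ (1-α) * (1-x) ^ (1-α)) - M * (T ^ (1-p) * (1-x) ^ (1-p))) * (1 + (1-α)*x)
              + A * T ^ (-p) := by linarith
          _ = K * (T ^ (1-α) * (1-x) ^ (1-α)) * (1 + (1-α)*x)
              - M * (T ^ (1-p) * (1-x) ^ (1-p)) * (1 + (1-α)*x) + A * T ^ (-p) := by ring
          _ ≤ K * T ^ (1 - α) - M * T ^ (1 - p) := by linarith
  -- conclude
  refine ⟨A + (1 - α) * K, by nlinarith, ?_⟩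
  intro t ht
  have hT0 : (0:ℝ) < (t:ℝ) := by exact_mod_cast ht
  have hT1 : (1:ℝ) ≤ (t:ℝ) := by exact_mod_cast ht
  have hd := hrec t ht
  have hScast : ((t - 1 : ℕ):ℝ) ≤ (t:ℝ) := by
    exact_mod_cast Nat.sub_le t 1
  have hSub : S (t-1) ≤ K * (t:ℝ) ^ (1 - α) := by
    have h1 := key (t-1)
    have h2 : ((t-1:ℕ):ℝ) ^ (1 - α) ≤ (t:ℝ) ^ (1 - α) :=
      Real.rpow_le_rpow (Nat.cast_nonneg _) hScast (by linarith)
    have h3 : 0 ≤ M * ((t-1:ℕ):ℝ) ^ (1 - p) :=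
      mul_nonneg hM.le (Real.rpow_nonneg (Nat.cast_nonneg _) _)
    nlinarith
  have hAp : A * (t:ℝ) ^ (-p) ≤ A * (t:ℝ) ^ (-α) := by
    apply mul_le_mul_of_nonneg_left _ hA.le
    exact Real.rpow_le_rpow_of_exponent_le hT1 (by linarith)
  have hxT : (t:ℝ) ^ (1 - α) / (t:ℝ) = (t:ℝ) ^ (-α) := by
    rw [show (1:ℝ) - α = -α + 1 by ring, Real.rpow_add hT0, Real.rpow_one]
    field_simp
  have hsum_eq : (∑ j ∈ Finset.Icc 1 (t - 1), d j) = S (t-1) := (hS_eq (t-1)).symm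
  rw [hsum_eq] at hd
  have hCes : ((1 - α) / (t:ℝ)) * S (t-1) ≤ (1 - α) * K * (t:ℝ) ^ (-α) := by
    have h1 : ((1 - α) / (t:ℝ)) * S (t-1) ≤ ((1 - α) / (t:ℝ)) * (K * (t:ℝ) ^ (1 - α)) := by
      apply mul_le_mul_of_nonneg_left hSub
      exact div_nonneg (by linarith) hT0.le
    calc ((1 - α) / (t:ℝ)) * S (t-1) ≤ ((1 - α) / (t:ℝ)) * (K * (t:ℝ) ^ (1 - α)) := h1
      _ = (1 - α) * K * ((t:ℝ) ^ (1 - α) / (t:ℝ)) := by ring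
      _ = (1 - α) * K * (t:ℝ) ^ (-α) := by rw [hxT]
  calc d t ≤ A * (t:ℝ) ^ (-p) + ((1 - α) / (t:ℝ)) * S (t-1) := hd
    _ ≤ A * (t:ℝ) ^ (-α) + (1 - α) * K * (t:ℝ) ^ (-α) := by linarith
    _ = (A + (1 - α) * K) * (t:ℝ) ^ (-α) := by ring

theorem crt_recursion_fast_baseline
    (α p A : ℝ) (hα : α ∈ Set.Ioo (0:ℝ) 1) (hA : 0 < A) (hp : α < p)
    (d : ℕ → ℝ) (hnonneg : ∀ t, 0 ≤ d t)
    (hrec : ∀ t : ℕ, 1 ≤ t →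
      d t ≤ A * (t : ℝ) ^ (-p) + ((1 - α) / t) * ∑ j ∈ Finset.Icc 1 (t - 1), d j) :
    ∃ C : ℝ, 0 < C ∧ ∀ t : ℕ, 1 ≤ t → d t ≤ C * (t : ℝ) ^ (-α) := by
  obtain ⟨hα0, hα1⟩ := hα
  set p' : ℝ := min p ((1 + α) / 2) with hp'_def
  have hp'α : α < p' := lt_min hp (by linarith)
  have hp'1 : p' < 1 := min_lt_of_right_lt (by linarith)
  have hp'p : p' ≤ p := min_le_left _ _
  apply crt_recursion_fast_baseline_aux α p' A ⟨hα0, hα1⟩ hA hp'α hp'1 d hnonneg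
  intro t ht
  refine (hrec t ht).trans ?_
  have h1 : (t:ℝ) ^ (-p) ≤ (t:ℝ) ^ (-p') := by
    apply Real.rpow_le_rpow_of_exponent_le
    · exact_mod_cast ht
    · linarith
  have := mul_le_mul_of_nonneg_left h1 hA.le
  linarith
end

section
/- Let α ∈ (0,1) and let (d_t)_{t≥1} be a nonnegative sequence satisfying d_t ≤ A t^{-p} + ((1-α)/t) ∑_{j=1}^{t-1} d_j for all t ≥ 1 with constants A > 0 and 0 < p < α. Then there exists a constant C > 0 such that d_t ≤ C t^{-p} for all t ≥ 1. -/
open Finset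

private lemma crt_step (p : ℝ) (hp : 0 < p) (hp1 : p < 1) (j : ℕ) (hj : 1 ≤ j) :
    (1 - p) * (j : ℝ) ^ (-p) ≤ (j : ℝ) ^ (1 - p) - ((j : ℝ) - 1) ^ (1 - p) := by
  have hjpos : (0 : ℝ) < j := by exact_mod_cast hj
  have hs : (-1 : ℝ) ≤ -(1 / (j : ℝ)) := by
    have : (1 : ℝ) / j ≤ 1 := by
      rw [div_le_one hjpos]; exact_mod_cast hj
    linarith
  have hB := rpow_one_add_le_one_add_mul_self hs (by linarith : (0:ℝ) ≤ 1 - p)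
    (by linarith : (1:ℝ) - p ≤ 1)
  have h1s : (0:ℝ) ≤ 1 + -(1 / (j : ℝ)) := by linarith
  have hmul : ((j : ℝ) - 1) ^ (1 - p)
      = (j : ℝ) ^ (1 - p) * (1 + -(1 / (j : ℝ))) ^ (1 - p) := by
    rw [← Real.mul_rpow hjpos.le h1s]
    congr 1
    field_simp
    ring
  have hjp : (0 : ℝ) < (j : ℝ) ^ (1 - p) := Real.rpow_pos_of_pos hjpos _
  have key : ((j : ℝ) - 1) ^ (1 - p)
      ≤ (j : ℝ) ^ (1 - p) * (1 + (1 - p) * -(1 / (j : ℝ))) := by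
    rw [hmul]
    exact mul_le_mul_of_nonneg_left hB hjp.le
  have hpow : (j : ℝ) ^ (-p) = (j : ℝ) ^ (1 - p) * (1 / (j : ℝ)) := by
    rw [show -p = (1 - p) - 1 by ring, Real.rpow_sub hjpos, Real.rpow_one, mul_one_div]
  nlinarith [key, hpow]

private lemma crt_sum (p : ℝ) (hp : 0 < p) (hp1 : p < 1) (n : ℕ) :
    ∑ j ∈ Finset.Icc 1 n, (j : ℝ) ^ (-p) ≤ (n : ℝ) ^ (1 - p) / (1 - p) := by
  induction n with
  | zero =>
      simp [Real.zero_rpow (by linarith : (1:ℝ) - p ≠ 0)]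
  | succ n ih =>
      rw [Finset.sum_Icc_succ_top (by omega : 1 ≤ n + 1)]
      have hstep := crt_step p hp hp1 (n + 1) (by omega)
      have h1p : (0:ℝ) < 1 - p := by linarith
      push_cast at hstep
      have hs' : ((n : ℝ) + 1 - 1) = (n : ℝ) := by ring
      rw [hs'] at hstep
      have hdiv : ((n : ℝ) + 1) ^ (-p) ≤ (((n:ℝ)+1) ^ (1-p) - (n : ℝ) ^ (1-p)) / (1 - p) := by
        rw [le_div_iff₀ h1p]
        nlinarith [hstep]
      have heq : (n : ℝ) ^ (1-p) / (1-p) + (((n:ℝ)+1) ^ (1-p) - (n : ℝ) ^ (1-p)) / (1 - p)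
          = ((n:ℝ)+1) ^ (1-p) / (1-p) := by ring
      push_cast
      linarith [ih]
  
theorem crt_recursion_slow_baseline
    (α p A : ℝ) (hα : α ∈ Set.Ioo (0:ℝ) 1) (hA : 0 < A) (hp : 0 < p) (hpα : p < α)
    (d : ℕ → ℝ) (hnonneg : ∀ t, 0 ≤ d t)
    (hrec : ∀ t : ℕ, 1 ≤ t →
      d t ≤ A * (t : ℝ) ^ (-p) + ((1 - α) / t) * ∑ j ∈ Finset.Icc 1 (t - 1), d j) :
    ∃ C : ℝ, 0 < C ∧ ∀ t : ℕ, 1 ≤ t → d t ≤ C * (t : ℝ) ^ (-p) := by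
  obtain ⟨hα0, hα1⟩ := hα
  have hp1 : p < 1 := hpα.trans hα1
  have h1p : (0:ℝ) < 1 - p := by linarith
  obtain ⟨q, hq⟩ : ∃ q : ℝ, q = (1 - α) / (1 - p) := ⟨_, rfl⟩
  have hq0 : 0 ≤ q := by rw [hq]; exact div_nonneg (by linarith) h1p.le
  have hq1 : q < 1 := by
    rw [hq, div_lt_one h1p]; linarith
  obtain ⟨C, hC⟩ : ∃ C : ℝ, C = A / (1 - q) := ⟨_, rfl⟩
  have hCpos : 0 < C := by rw [hC]; exact div_pos hA (by linarith)
  have h1q : (1:ℝ) - q ≠ 0 := by linarith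
  have hCq : A + C * q = C := by
    rw [hC]; field_simp; ring
  refine ⟨C, hCpos, ?_⟩
  intro t
  induction t using Nat.strong_induction_on with
  | _ t ih =>
    intro ht
    have htpos : (0 : ℝ) < t := by exact_mod_cast ht
    have hsum : ∑ j ∈ Finset.Icc 1 (t - 1), d j
        ≤ C * ((t : ℝ) ^ (1 - p) / (1 - p)) := by
      calc ∑ j ∈ Finset.Icc 1 (t - 1), d j
          ≤ ∑ j ∈ Finset.Icc 1 (t - 1), C * (j : ℝ) ^ (-p) := by
            apply Finset.sum_le_sum
            intro j hj
            simp only [Finset.mem_Icc] at hj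
            exact ih j (by omega) hj.1
        _ = C * ∑ j ∈ Finset.Icc 1 (t - 1), (j : ℝ) ^ (-p) := by
            rw [Finset.mul_sum]
        _ ≤ C * (((t - 1 : ℕ) : ℝ) ^ (1 - p) / (1 - p)) := by
            apply mul_le_mul_of_nonneg_left (crt_sum p hp hp1 _) hCpos.le
        _ ≤ C * ((t : ℝ) ^ (1 - p) / (1 - p)) := by
            apply mul_le_mul_of_nonneg_left _ hCpos.le
            gcongr
            all_goals first
              | exact_mod_cast Nat.sub_le t 1
              | positivity
              | linarith
    have hfrac : ((1 - α) / t) * (C * ((t : ℝ) ^ (1 - p) / (1 - p)))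
        = C * q * (t : ℝ) ^ (-p) := by
      have hpow : (t : ℝ) ^ (-p) = (t : ℝ) ^ (1 - p) / (t : ℝ) := by
        rw [show -p = (1 - p) - 1 by ring, Real.rpow_sub htpos, Real.rpow_one]
      rw [hq, hpow]
      field_simp
    have h1α : 0 ≤ (1 - α) / (t : ℝ) := div_nonneg (by linarith) htpos.le
    calc d t ≤ A * (t : ℝ) ^ (-p) + ((1 - α) / t) * ∑ j ∈ Finset.Icc 1 (t - 1), d j :=
          hrec t ht
      _ ≤ A * (t : ℝ) ^ (-p) + ((1 - α) / t) * (C * ((t : ℝ) ^ (1 - p) / (1 - p))) := by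
          have := mul_le_mul_of_nonneg_left hsum h1α
          linarith
      _ = A * (t : ℝ) ^ (-p) + C * q * (t : ℝ) ^ (-p) := by rw [hfrac]
      _ = (A + C * q) * (t : ℝ) ^ (-p) := by ring
      _ = C * (t : ℝ) ^ (-p) := by rw [hCq]
end

section
/- Let α ∈ (0,1) and let (d_t)_{t≥1} be a nonnegative sequence satisfying d_t ≤ A t^{-α} + ((1-α)/t) ∑_{j=1}^{t-1} d_j for all t ≥ 1 with A > 0. Then there exists a constant C > 0 such that d_t ≤ C t^{-α} log(t+1) for all t ≥ 1. -/
open Finset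

lemma crt_aux_log {y : ℝ} (hy : 0 < y) :
    1 / (y + 1) ≤ Real.log (y + 1) - Real.log y := by
  have h := Real.log_le_sub_one_of_pos (show 0 < y / (y + 1) from div_pos hy (by linarith))
  have e1 : Real.log (y / (y + 1)) = Real.log y - Real.log (y + 1) :=
    Real.log_div (ne_of_gt hy) (by linarith)
  have e2 : y / (y + 1) - 1 = -(1 / (y + 1)) := by field_simp; ring
  rw [e1] at h
  linarith

lemma crt_aux_pow {x β : ℝ} (hx : 1 ≤ x) (hβ0 : 0 < β) (hβ1 : β ≤ 1) :
    (1 + β / (x + 1)) * x ^ β ≤ (x + 1) ^ β := by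
  have hx0 : 0 < x := by linarith
  have hx1 : 0 < x + 1 := by linarith
  have hdiv : 0 < (x + 1) / x := div_pos hx1 hx0
  have hlog : 1 / (x + 1) ≤ Real.log ((x + 1) / x) := by
    have h := crt_aux_log hx0
    have e : Real.log ((x + 1) / x) = Real.log (x + 1) - Real.log x :=
      Real.log_div (by linarith) (ne_of_gt hx0)
    linarith
  have h2 : 1 + β / (x + 1) ≤ Real.exp (β * Real.log ((x + 1) / x)) := by
    have ha : β / (x + 1) ≤ β * Real.log ((x + 1) / x) := by
      have := mul_le_mul_of_nonneg_left hlog hβ0.le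
      calc β / (x + 1) = β * (1 / (x + 1)) := by ring
        _ ≤ _ := this
    have hb := Real.add_one_le_exp (β * Real.log ((x + 1) / x))
    linarith
  have h3 : ((x + 1) / x) ^ β = Real.exp (β * Real.log ((x + 1) / x)) := by
    rw [Real.rpow_def_of_pos hdiv, mul_comm]
  have h4 : 1 + β / (x + 1) ≤ ((x + 1) / x) ^ β := by rw [h3]; exact h2
  have h5 : ((x + 1) / x) ^ β * x ^ β = (x + 1) ^ β := by
    rw [← Real.mul_rpow (le_of_lt hdiv) hx0.le, div_mul_cancel₀]
    exact ne_of_gt hx0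
  calc (1 + β / (x + 1)) * x ^ β ≤ ((x + 1) / x) ^ β * x ^ β :=
        mul_le_mul_of_nonneg_right h4 (Real.rpow_nonneg hx0.le β)
    _ = (x + 1) ^ β := h5

theorem crt_recursion_boundary
    (α A : ℝ) (hα : α ∈ Set.Ioo (0:ℝ) 1) (hA : 0 < A)
    (d : ℕ → ℝ) (hnonneg : ∀ t, 0 ≤ d t)
    (hrec : ∀ t : ℕ, 1 ≤ t →
      d t ≤ A * (t : ℝ) ^ (-α) + ((1 - α) / t) * ∑ j ∈ Finset.Icc 1 (t - 1), d j) :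
    ∃ C : ℝ, 0 < C ∧ ∀ t : ℕ, 1 ≤ t →
      d t ≤ C * (t : ℝ) ^ (-α) * Real.log (t + 1) := by
  obtain ⟨hα0, hα1⟩ := hα
  have hβ0 : 0 < 1 - α := by linarith
  have hβ1 : 1 - α ≤ 1 := by linarith
  set β : ℝ := 1 - α with hβdef
  set K : ℝ := 2 * A with hKdef
  have hK0 : 0 < K := by positivity
  have hlog2 : (0.6931471803 : ℝ) < Real.log 2 := Real.log_two_gt_d9
  have hSnon : ∀ t : ℕ, 0 ≤ ∑ j ∈ Finset.Icc 1 t, d j :=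
    fun t => Finset.sum_nonneg fun j _ => hnonneg j
  have key : ∀ t : ℕ, (∑ j ∈ Finset.Icc 1 t, d j) ≤ K * (t : ℝ) ^ β * Real.log (t + 1) := by
    intro t
    induction t with
    | zero => simp
    | succ t ih =>
      have h1t : (1 : ℕ) ≤ t + 1 := Nat.succ_le_succ (Nat.zero_le t)
      have hstep : (∑ j ∈ Finset.Icc 1 (t + 1), d j)
          = (∑ j ∈ Finset.Icc 1 t, d j) + d (t + 1) :=
        Finset.sum_Icc_succ_top h1t d
      have hrec' := hrec (t + 1) h1t
      simp only [Nat.add_sub_cancel] at hrec'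
      have hcast : ((t + 1 : ℕ) : ℝ) = (t : ℝ) + 1 := by push_cast; ring
      rw [hcast] at hrec'
      have hpos1 : (0 : ℝ) < (t : ℝ) + 1 := by positivity
      rcases Nat.eq_zero_or_pos t with h0 | htpos
      · subst h0
        have hS0 : (∑ j ∈ Finset.Icc 1 0, d j) = 0 := by simp
        rw [hS0] at hrec'
        have hd1 : d 1 ≤ A := by
          have : ((0 : ℕ) : ℝ) + 1 = (1 : ℝ) := by norm_num
          rw [this] at hrec'
          simpa using hrec'
        have : (∑ j ∈ Finset.Icc 1 1, d j) = d 1 := by simp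
        rw [this]
        have h1 : ((0 : ℕ) : ℝ) + 1 = (1 : ℝ) := by norm_num
        rw [show (((0:ℕ) + 1 : ℕ) : ℝ) = (1 : ℝ) by norm_num]
        rw [Real.one_rpow]
        have : ((1 : ℝ) + 1) = 2 := by norm_num
        rw [this]
        nlinarith [hd1, hlog2, hA]
      · -- t ≥ 1
        have hx1 : (1 : ℝ) ≤ (t : ℝ) := by exact_mod_cast htpos
        have ht0 : (0 : ℝ) < (t : ℝ) := by linarith
        have hpow := crt_aux_pow hx1 hβ0 hβ1
        have hlogt1 : 0 ≤ Real.log ((t : ℝ) + 1) := Real.log_nonneg (by linarith)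
        -- step 1: bound d (t+1)
        have hd : d (t + 1) ≤ A * ((t : ℝ) + 1) ^ (-α)
            + (β / ((t : ℝ) + 1)) * (∑ j ∈ Finset.Icc 1 t, d j) := hrec'
        -- step 2: combine with ih
        have hc1 : (∑ j ∈ Finset.Icc 1 (t + 1), d j)
            ≤ (1 + β / ((t : ℝ) + 1)) * (∑ j ∈ Finset.Icc 1 t, d j)
              + A * ((t : ℝ) + 1) ^ (-α) := by
          have hexp : (1 + β / ((t : ℝ) + 1)) * (∑ j ∈ Finset.Icc 1 t, d j)
              = (∑ j ∈ Finset.Icc 1 t, d j)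
                + (β / ((t : ℝ) + 1)) * (∑ j ∈ Finset.Icc 1 t, d j) := by ring
          rw [hstep]; linarith [hd]
        have hfac : (0 : ℝ) ≤ 1 + β / ((t : ℝ) + 1) := by positivity
        have hc2 : (1 + β / ((t : ℝ) + 1)) * (∑ j ∈ Finset.Icc 1 t, d j)
            ≤ (1 + β / ((t : ℝ) + 1)) * (K * (t : ℝ) ^ β * Real.log ((t : ℝ) + 1)) :=
          mul_le_mul_of_nonneg_left ih hfac
        have hc3 : (1 + β / ((t : ℝ) + 1)) * (K * (t : ℝ) ^ β * Real.log ((t : ℝ) + 1))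
            ≤ K * ((t : ℝ) + 1) ^ β * Real.log ((t : ℝ) + 1) := by
          have := mul_le_mul_of_nonneg_right hpow (mul_nonneg hK0.le hlogt1)
          calc (1 + β / ((t : ℝ) + 1)) * (K * (t : ℝ) ^ β * Real.log ((t : ℝ) + 1))
              = ((1 + β / ((t : ℝ) + 1)) * (t : ℝ) ^ β) * (K * Real.log ((t : ℝ) + 1)) := by
                ring
            _ ≤ ((t : ℝ) + 1) ^ β * (K * Real.log ((t : ℝ) + 1)) := this
            _ = K * ((t : ℝ) + 1) ^ β * Real.log ((t : ℝ) + 1) := by ring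
        -- step 3: logarithmic gain
        have hlog : 1 / ((t : ℝ) + 2)
            ≤ Real.log ((t : ℝ) + 2) - Real.log ((t : ℝ) + 1) := by
          have := crt_aux_log hpos1
          have e : ((t : ℝ) + 1) + 1 = (t : ℝ) + 2 := by ring
          rw [e] at this
          exact this
        have hsplit : ((t : ℝ) + 1) ^ β = ((t : ℝ) + 1) * ((t : ℝ) + 1) ^ (-α) := by
          rw [hβdef, show (1 : ℝ) - α = 1 + (-α) by ring, Real.rpow_add hpos1,
            Real.rpow_one]
        have hrpos : (0 : ℝ) < ((t : ℝ) + 1) ^ (-α) := Real.rpow_pos_of_pos hpos1 _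
        have hgain : A * ((t : ℝ) + 1) ^ (-α)
            ≤ K * ((t : ℝ) + 1) ^ β * (Real.log ((t : ℝ) + 2) - Real.log ((t : ℝ) + 1)) := by
          have h1 : K * ((t : ℝ) + 1) ^ β * (1 / ((t : ℝ) + 2))
              ≤ K * ((t : ℝ) + 1) ^ β * (Real.log ((t : ℝ) + 2) - Real.log ((t : ℝ) + 1)) :=
            mul_le_mul_of_nonneg_left hlog (by positivity)
          have h2 : K * ((t : ℝ) + 1) ^ β * (1 / ((t : ℝ) + 2))
              = K * ((t : ℝ) + 1) ^ (-α) * (((t : ℝ) + 1) / ((t : ℝ) + 2)) := by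
            rw [hsplit]; ring
          have hpos2 : (0 : ℝ) < (t : ℝ) + 2 := by linarith
          have h3 : (1 : ℝ) / 2 ≤ ((t : ℝ) + 1) / ((t : ℝ) + 2) := by
            rw [div_le_div_iff₀ (by norm_num) hpos2]; linarith
          have h4 : A * ((t : ℝ) + 1) ^ (-α)
              ≤ K * ((t : ℝ) + 1) ^ (-α) * (((t : ℝ) + 1) / ((t : ℝ) + 2)) := by
            have : K * ((t : ℝ) + 1) ^ (-α) * (1 / 2)
                ≤ K * ((t : ℝ) + 1) ^ (-α) * (((t : ℝ) + 1) / ((t : ℝ) + 2)) :=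
              mul_le_mul_of_nonneg_left h3 (by positivity)
            have e : K * ((t : ℝ) + 1) ^ (-α) * (1 / 2) = A * ((t : ℝ) + 1) ^ (-α) := by
              rw [hKdef]; ring
            linarith
          linarith
        have hfinal : (∑ j ∈ Finset.Icc 1 (t + 1), d j)
            ≤ K * ((t : ℝ) + 1) ^ β * Real.log ((t : ℝ) + 2) := by
          have hexp : K * ((t : ℝ) + 1) ^ β * (Real.log ((t : ℝ) + 2) - Real.log ((t : ℝ) + 1))
              = K * ((t : ℝ) + 1) ^ β * Real.log ((t : ℝ) + 2)
                - K * ((t : ℝ) + 1) ^ β * Real.log ((t : ℝ) + 1) := by ring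
          linarith [hc1, hc2, hc3, hgain]
        rw [hcast]
        have e : ((t : ℝ) + 1) + 1 = (t : ℝ) + 2 := by ring
        rw [e]
        exact hfinal
  -- conclude
  refine ⟨4 * A, by linarith, ?_⟩
  intro t ht
  have ht0 : (0 : ℝ) < (t : ℝ) := by exact_mod_cast Nat.lt_of_lt_of_le Nat.zero_lt_one ht
  have hx1 : (1 : ℝ) ≤ (t : ℝ) := by exact_mod_cast ht
  have hrec' := hrec t ht
  have hcast : ((t - 1 : ℕ) : ℝ) = (t : ℝ) - 1 := by
    have := Nat.cast_sub ht (R := ℝ)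
    simpa using this
  have hkey := key (t - 1)
  rw [hcast] at hkey
  have e1 : (t : ℝ) - 1 + 1 = (t : ℝ) := by ring
  rw [e1] at hkey
  have h1 : ((t : ℝ) - 1) ^ β ≤ (t : ℝ) ^ β :=
    Real.rpow_le_rpow (by linarith) (by linarith) hβ0.le
  have h2 : Real.log (t : ℝ) ≤ Real.log ((t : ℝ) + 1) :=
    Real.log_le_log ht0 (by linarith)
  have hlogt : 0 ≤ Real.log (t : ℝ) := Real.log_nonneg hx1
  have hlogt1 : 0 ≤ Real.log ((t : ℝ) + 1) := Real.log_nonneg (by linarith)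
  have hS : (∑ j ∈ Finset.Icc 1 (t - 1), d j) ≤ K * (t : ℝ) ^ β * Real.log ((t : ℝ) + 1) := by
    calc (∑ j ∈ Finset.Icc 1 (t - 1), d j) ≤ K * ((t : ℝ) - 1) ^ β * Real.log (t : ℝ) := hkey
      _ ≤ K * (t : ℝ) ^ β * Real.log (t : ℝ) := by
          apply mul_le_mul_of_nonneg_right _ hlogt
          exact mul_le_mul_of_nonneg_left h1 hK0.le
      _ ≤ K * (t : ℝ) ^ β * Real.log ((t : ℝ) + 1) := by
          apply mul_le_mul_of_nonneg_left h2 (by positivity)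
  have hdt : d t ≤ A * (t : ℝ) ^ (-α) + (β / (t : ℝ)) * (K * (t : ℝ) ^ β * Real.log ((t : ℝ) + 1)) := by
    have hmul : (β / (t : ℝ)) * (∑ j ∈ Finset.Icc 1 (t - 1), d j)
        ≤ (β / (t : ℝ)) * (K * (t : ℝ) ^ β * Real.log ((t : ℝ) + 1)) :=
      mul_le_mul_of_nonneg_left hS (by positivity)
    linarith [hrec']
  have hsplit : (t : ℝ) ^ β / (t : ℝ) = (t : ℝ) ^ (-α) := by
    nth_rewrite 2 [show (t : ℝ) = (t : ℝ) ^ (1 : ℝ) from (Real.rpow_one _).symm]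
    rw [← Real.rpow_sub ht0]
    congr 1
    rw [hβdef]; ring
  have he : (β / (t : ℝ)) * (K * (t : ℝ) ^ β * Real.log ((t : ℝ) + 1))
      = β * K * (t : ℝ) ^ (-α) * Real.log ((t : ℝ) + 1) := by
    rw [← hsplit]; ring
  rw [he] at hdt
  have hrpos : (0 : ℝ) < (t : ℝ) ^ (-α) := Real.rpow_pos_of_pos ht0 _
  have hlogge : (1 : ℝ) / 2 ≤ Real.log ((t : ℝ) + 1) := by
    have h2le : Real.log 2 ≤ Real.log ((t : ℝ) + 1) :=
      Real.log_le_log (by norm_num) (by linarith)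
    linarith
  have hA1 : A * (t : ℝ) ^ (-α) ≤ 2 * A * (t : ℝ) ^ (-α) * Real.log ((t : ℝ) + 1) := by
    have h := mul_le_mul_of_nonneg_left hlogge (by positivity : (0:ℝ) ≤ 2 * A * (t : ℝ) ^ (-α))
    have e : 2 * A * (t : ℝ) ^ (-α) * (1 / 2) = A * (t : ℝ) ^ (-α) := by ring
    linarith
  have hA2 : β * K * (t : ℝ) ^ (-α) * Real.log ((t : ℝ) + 1)
      ≤ 2 * A * (t : ℝ) ^ (-α) * Real.log ((t : ℝ) + 1) := by
    have hbk : β * K ≤ 2 * A := by rw [hKdef]; nlinarith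
    have hfac : (0:ℝ) ≤ (t : ℝ) ^ (-α) * Real.log ((t : ℝ) + 1) :=
      mul_nonneg hrpos.le hlogt1
    have h := mul_le_mul_of_nonneg_right hbk hfac
    calc β * K * (t : ℝ) ^ (-α) * Real.log ((t : ℝ) + 1)
        = β * K * ((t : ℝ) ^ (-α) * Real.log ((t : ℝ) + 1)) := by ring
      _ ≤ 2 * A * ((t : ℝ) ^ (-α) * Real.log ((t : ℝ) + 1)) := h
      _ = 2 * A * (t : ℝ) ^ (-α) * Real.log ((t : ℝ) + 1) := by ring
  calc d t ≤ A * (t : ℝ) ^ (-α) + β * K * (t : ℝ) ^ (-α) * Real.log ((t : ℝ) + 1) := hdt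
    _ ≤ 4 * A * (t : ℝ) ^ (-α) * Real.log ((t : ℝ) + 1) := by linarith
end

section
/- In the biased CRT setting, if the real-data distributions satisfy d(P_t^{bias}, P₀) ≤ B t^{-q} and the estimator satisfies d(P̂_t, Q_t) ≤ M · M_t^{-p}, where Q_t = (m₁ ∑_{j=1}^t P_j^{bias} + m₂ ∑_{j=1}^{t-1} P̂_j)/M_t, M_t = t m₁ + (t-1) m₂, and min(p, q) < α := m₁/(m₁+m₂) with p, q, α ∈ (0,1), then d(P̂_t, P₀) ≤ C t^{-min(p,q)} for all t ≥ 1 and some constant C > 0. -/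
open MeasureTheory Finset
open scoped ENNReal

theorem bcrt_fin_convex {Ω : Type*} [MeasurableSpace Ω]
    (d : Measure Ω → Measure Ω → ℝ)
    (hconv : ∀ (P Q₁ Q₂ : Measure Ω) (lam : ℝ), lam ∈ Set.Icc (0:ℝ) 1 →
      d P (ENNReal.ofReal lam • Q₁ + ENNReal.ofReal (1 - lam) • Q₂)
        ≤ lam * d P Q₁ + (1 - lam) * d P Q₂)
    (P : Measure Ω) {ι : Type*} (μ : ι → Measure Ω) (s : Finset ι) :
    ∀ (w : ι → ℝ), (∀ i ∈ s, 0 ≤ w i) → ∑ i ∈ s, w i = 1 →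
    d P (∑ i ∈ s, ENNReal.ofReal (w i) • μ i) ≤ ∑ i ∈ s, w i * d P (μ i) := by
  induction s using Finset.cons_induction_on with
  | empty => intro w hw hsum; simp at hsum
  | @cons a s ha IH =>
    intro w hw hsum
    rw [Finset.sum_cons] at hsum ⊢
    rw [Finset.sum_cons]
    have hwa : 0 ≤ w a := hw a (Finset.mem_cons_self a s)
    have hws : ∀ i ∈ s, 0 ≤ w i := fun i hi => hw i (Finset.mem_cons_of_mem hi)
    have hsum' : ∑ i ∈ s, w i = 1 - w a := by linarith
    have hwa1 : w a ≤ 1 := by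
      have : 0 ≤ ∑ i ∈ s, w i := Finset.sum_nonneg hws
      linarith
    rcases eq_or_lt_of_le hwa1 with heq | hlt
    · have hz : ∀ i ∈ s, w i = 0 := by
        have h0 : ∑ i ∈ s, w i = 0 := by rw [hsum', heq]; ring
        exact (Finset.sum_eq_zero_iff_of_nonneg hws).mp h0
      have hms : ∑ i ∈ s, ENNReal.ofReal (w i) • μ i = 0 := by
        apply Finset.sum_eq_zero
        intro i hi
        rw [hz i hi]; simp
      have hrs : ∑ i ∈ s, w i * d P (μ i) = 0 := by
        apply Finset.sum_eq_zero
        intro i hi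
        rw [hz i hi]; ring
      rw [hms, hrs, heq]
      simp
    · set c : ℝ := 1 - w a with hc
      have hc0 : 0 < c := by linarith
      set μ' : Measure Ω := ∑ i ∈ s, ENNReal.ofReal (w i / c) • μ i with hμ'
      have key : ENNReal.ofReal c • μ' = ∑ i ∈ s, ENNReal.ofReal (w i) • μ i := by
        rw [hμ', Finset.smul_sum]
        apply Finset.sum_congr rfl
        intro i hi
        rw [smul_smul, ← ENNReal.ofReal_mul hc0.le, mul_div_cancel₀ _ hc0.ne']
      have IH' : d P μ' ≤ ∑ i ∈ s, (w i / c) * d P (μ i) := by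
        apply IH (fun i => w i / c) (fun i hi => div_nonneg (hws i hi) hc0.le)
        rw [← Finset.sum_div, hsum', div_self hc0.ne']
      have hcv := hconv P (μ a) μ' (w a) ⟨hwa, hwa1⟩
      rw [← hc, key] at hcv
      refine hcv.trans ?_
      have : c * d P μ' ≤ ∑ i ∈ s, w i * d P (μ i) := by
        calc c * d P μ' ≤ c * ∑ i ∈ s, (w i / c) * d P (μ i) :=
              mul_le_mul_of_nonneg_left IH' hc0.le
          _ = ∑ i ∈ s, w i * d P (μ i) := by
              rw [Finset.mul_sum]
              apply Finset.sum_congr rfl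
              intro i hi
              field_simp
      linarith

theorem bcrt_sum_rpow_le (r : ℝ) (hr0 : 0 < r) (hr1 : r < 1) (n : ℕ) :
    ∑ j ∈ Finset.Icc 1 n, (j : ℝ) ^ (-r) ≤ (n : ℝ) ^ (1 - r) / (1 - r) := by
  induction n with
  | zero => simp [Real.zero_rpow (by linarith : (1:ℝ) - r ≠ 0)]
  | succ n IH =>
    rw [Finset.sum_Icc_succ_top (by omega)]
    have hn1 : (0:ℝ) < (n:ℝ) + 1 := by positivity
    have h1r : (0:ℝ) < 1 - r := by linarith
    have hstep : (n : ℝ) ^ (1 - r) + (1 - r) * ((n:ℝ) + 1) ^ (-r) ≤ ((n:ℝ) + 1) ^ (1 - r) := by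
      have amgm : (n : ℝ) ^ (1 - r) * ((n:ℝ) + 1) ^ r ≤ (1 - r) * n + r * ((n:ℝ)+1) :=
        Real.geom_mean_le_arith_mean2_weighted (by linarith) hr0.le (Nat.cast_nonneg n)
          hn1.le (by ring)
      have hmul : (n : ℝ) ^ (1 - r) = ((n : ℝ) ^ (1 - r) * ((n:ℝ) + 1) ^ r) * ((n:ℝ)+1) ^ (-r) := by
        rw [mul_assoc, ← Real.rpow_add hn1, add_neg_cancel, Real.rpow_zero, mul_one]
      have h2 : ((n:ℝ)+1) ^ (1 - r) = ((n:ℝ)+1) * ((n:ℝ)+1) ^ (-r) := by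
        rw [show (1:ℝ) - r = 1 + (-r) by ring, Real.rpow_add hn1, Real.rpow_one]
      have hpos : (0:ℝ) ≤ ((n:ℝ)+1) ^ (-r) := Real.rpow_nonneg hn1.le _
      calc (n : ℝ) ^ (1 - r) + (1 - r) * ((n:ℝ) + 1) ^ (-r)
          = ((n : ℝ) ^ (1 - r) * ((n:ℝ) + 1) ^ r) * ((n:ℝ)+1) ^ (-r)
            + (1 - r) * ((n:ℝ) + 1) ^ (-r) := by rw [← hmul]
        _ ≤ ((1 - r) * n + r * ((n:ℝ)+1)) * ((n:ℝ)+1) ^ (-r)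
            + (1 - r) * ((n:ℝ) + 1) ^ (-r) :=
            add_le_add_left (mul_le_mul_of_nonneg_right amgm hpos) _
        _ = ((n:ℝ)+1) * ((n:ℝ)+1) ^ (-r) := by ring
        _ = ((n:ℝ)+1) ^ (1 - r) := h2.symm
    have h3 : (n:ℝ) ^ (1-r) / (1-r) + ((n:ℝ)+1) ^ (-r) ≤ ((n:ℝ)+1) ^ (1-r) / (1-r) := by
      rw [div_add' _ _ _ h1r.ne']
      gcongr
      linarith [hstep]
    push_cast
    linarith [IH]

set_option maxHeartbeats 1000000 in
theorem bcrt_convergence_min_pq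
    {Ω : Type*} [MeasurableSpace Ω]
    (d : Measure Ω → Measure Ω → ℝ)
    (hnonneg : ∀ P Q : Measure Ω, 0 ≤ d P Q)
    (hsymm : ∀ P Q : Measure Ω, d P Q = d Q P)
    (htri : ∀ P Q R : Measure Ω, d P Q ≤ d P R + d R Q)
    (hconv : ∀ (P Q₁ Q₂ : Measure Ω) (lam : ℝ), lam ∈ Set.Icc (0:ℝ) 1 →
      d P (ENNReal.ofReal lam • Q₁ + ENNReal.ofReal (1 - lam) • Q₂)
        ≤ lam * d P Q₁ + (1 - lam) * d P Q₂)
    (m₁ m₂ : ℕ) (hm₁ : 0 < m₁) (hm₂ : 0 < m₂)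
    (P₀ : Measure Ω) (hP₀ : IsProbabilityMeasure P₀)
    (Pbias : ℕ → Measure Ω) (hPbiasProb : ∀ t, IsProbabilityMeasure (Pbias t))
    (Phat : ℕ → Measure Ω) (hPhat : ∀ t, IsProbabilityMeasure (Phat t))
    (M p B q : ℝ) (hM : 0 < M) (hB : 0 < B)
    (hp : p ∈ Set.Ioo (0:ℝ) 1) (hq : q ∈ Set.Ioo (0:ℝ) 1)
    -- bias decay toward the target at rate q
    (hbias : ∀ t : ℕ, 1 ≤ t → d (Pbias t) P₀ ≤ B * (t : ℝ) ^ (-q))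
    -- accumulated training distribution Q t with total size M_t = t m₁ + (t-1) m₂
    (Q : ℕ → Measure Ω)
    (hQ : ∀ t : ℕ, 1 ≤ t →
      Q t = (∑ j ∈ Finset.Icc 1 t,
                ((m₁ : ℝ≥0∞) / (t * m₁ + (t - 1) * m₂ : ℕ)) • Pbias j)
            + ∑ j ∈ Finset.Icc 1 (t - 1),
                ((m₂ : ℝ≥0∞) / (t * m₁ + (t - 1) * m₂ : ℕ)) • Phat j)
    -- baseline estimator guarantee at sample size M_t
    (hest : ∀ t : ℕ, 1 ≤ t →
      d (Phat t) (Q t) ≤ M * ((t * m₁ + (t - 1) * m₂ : ℕ) : ℝ) ^ (-p))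
    -- min(p,q) < α = m₁/(m₁+m₂), with α ∈ (0,1)
    (hpqα : min p q < (m₁ : ℝ) / (m₁ + m₂)) :
    ∃ C : ℝ, 0 < C ∧ ∀ t : ℕ, 1 ≤ t →
      d (Phat t) P₀ ≤ C * (t : ℝ) ^ (-(min p q)) := by
  set r := min p q with hrdef
  have hr0 : 0 < r := lt_min hp.1 hq.1
  have hrp : r ≤ p := min_le_left _ _
  have hrq : r ≤ q := min_le_right _ _
  have hr1 : r < 1 := lt_of_le_of_lt hrp hp.2
  have h1r : (0:ℝ) < 1 - r := by linarith
  have h1q : (0:ℝ) < 1 - q := by linarith [hq.2]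
  have hm₁R : (1:ℝ) ≤ (m₁:ℝ) := by exact_mod_cast hm₁
  have hm₂R : (0:ℝ) < (m₂:ℝ) := by exact_mod_cast hm₂
  have hsumR : (0:ℝ) < (m₁:ℝ) + m₂ := by linarith
  have hrα : r * ((m₁:ℝ) + m₂) < m₁ := (lt_div_iff₀ hsumR).mp hpqα
  -- δ and N
  obtain ⟨δ, hδdef⟩ : ∃ δ : ℝ, δ = (m₁:ℝ) + m₂ - m₂ / (1 - r) := ⟨_, rfl⟩
  have hδ0 : 0 < δ := by
    have h : (m₂:ℝ) / (1 - r) < (m₁:ℝ) + m₂ := by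
      rw [div_lt_iff₀ h1r]
      have e : ((m₁:ℝ) + m₂) * (1 - r) = (m₁ + m₂) - r * ((m₁:ℝ) + m₂) := by ring
      rw [e]
      linarith [hrα]
    rw [hδdef]; linarith
  obtain ⟨N₀, hN₀⟩ := exists_nat_gt ((m₂:ℝ) / δ)
  set N : ℕ := N₀ + 1 with hNdef
  have hN1 : 1 ≤ N := Nat.le_add_left 1 N₀
  have hN0R : (0:ℝ) < (N:ℝ) := by positivity
  have hNgt : (m₂:ℝ) / δ < (N:ℝ) := by
    refine hN₀.trans_le ?_
    exact_mod_cast Nat.le_succ N₀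
  have hm₂N : (m₂:ℝ) / N < δ := by
    rw [div_lt_iff₀ hN0R]
    calc (m₂:ℝ) = δ * ((m₂:ℝ)/δ) := by field_simp
      _ < δ * N := mul_lt_mul_of_pos_left hNgt hδ0
  obtain ⟨D, hDdef⟩ : ∃ D : ℝ, D = (m₁:ℝ) + m₂ - m₂ / N := ⟨_, rfl⟩
  have hD0 : 0 < D := by
    have h : (m₂:ℝ)/N ≤ m₂ := by
      rw [div_le_iff₀ hN0R]
      have h1N : (1:ℝ) ≤ (N:ℝ) := by exact_mod_cast hN1
      calc (m₂:ℝ) = m₂ * 1 := by ring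
        _ ≤ m₂ * N := mul_le_mul_of_nonneg_left h1N hm₂R.le
    rw [hDdef]
    linarith
  obtain ⟨θ, hθdef⟩ : ∃ θ : ℝ, θ = (m₂:ℝ) / ((1 - r) * D) := ⟨_, rfl⟩
  have hθ0 : 0 < θ := by rw [hθdef]; positivity
  have hθ1 : θ < 1 := by
    rw [hθdef, div_lt_one (by positivity)]
    -- m₂ < (1-r) * D  ⟸  m₂/(1-r) < D ⟸ m₂/N < δ
    have h : (m₂:ℝ) / (1 - r) < D := by
      rw [hDdef]
      rw [hδdef] at hm₂N
      linarith
    calc (m₂:ℝ) = (1 - r) * ((m₂:ℝ)/(1-r)) := by field_simp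
      _ < (1 - r) * D := by exact mul_lt_mul_of_pos_left h h1r
  -- constants
  obtain ⟨K₀, hK₀def⟩ : ∃ K₀ : ℝ, K₀ = M + B / (1 - q) := ⟨_, rfl⟩
  have hK₀0 : 0 < K₀ := by rw [hK₀def]; positivity
  obtain ⟨C₁, hC₁def⟩ : ∃ C₁ : ℝ, C₁ = 1 + ∑ j ∈ Finset.range N, d (Phat j) P₀ * (j:ℝ) ^ r := ⟨_, rfl⟩
  have hC₁1 : 1 ≤ C₁ := by
    have : 0 ≤ ∑ j ∈ Finset.range N, d (Phat j) P₀ * (j:ℝ) ^ r :=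
      Finset.sum_nonneg fun j _ => mul_nonneg (hnonneg _ _) (Real.rpow_nonneg (Nat.cast_nonneg j) r)
    rw [hC₁def]
    linarith
  obtain ⟨C, hCdef⟩ : ∃ C : ℝ, C = max (K₀ / (1 - θ)) C₁ := ⟨_, rfl⟩
  have hCC₁ : C₁ ≤ C := hCdef ▸ le_max_right _ _
  have hCK : K₀ / (1 - θ) ≤ C := hCdef ▸ le_max_left _ _
  have hC0 : 0 < C := lt_of_lt_of_le (by linarith : (0:ℝ) < C₁) hCC₁
  refine ⟨C, hC0, ?_⟩
  -- the recursion inequality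
  have hrec : ∀ t : ℕ, 1 ≤ t → d (Phat t) P₀ ≤
      M * ((t * m₁ + (t - 1) * m₂ : ℕ) : ℝ) ^ (-p)
      + ((∑ j ∈ Finset.Icc 1 t,
            ((m₁:ℝ) / ((t * m₁ + (t - 1) * m₂ : ℕ) : ℝ)) * d P₀ (Pbias j))
        + ∑ j ∈ Finset.Icc 1 (t-1),
            ((m₂:ℝ) / ((t * m₁ + (t - 1) * m₂ : ℕ) : ℝ)) * d P₀ (Phat j)) := by
    intro t ht
    have hNt0 : 0 < t * m₁ + (t - 1) * m₂ := by
      have h1 : 1 ≤ t * m₁ := Nat.one_le_iff_ne_zero.mpr (Nat.mul_ne_zero (by omega) (by omega))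
      omega
    have hNtR : (0:ℝ) < ((t * m₁ + (t - 1) * m₂ : ℕ) : ℝ) := by exact_mod_cast hNt0
    have hcastt1 : ((t - 1 : ℕ) : ℝ) = (t:ℝ) - 1 := by
      rw [Nat.cast_sub ht]; norm_num
    have hNtcast : ((t * m₁ + (t - 1) * m₂ : ℕ) : ℝ) = (t:ℝ) * m₁ + ((t:ℝ) - 1) * m₂ := by
      push_cast
      rw [hcastt1]
    have hcoef₁ : ENNReal.ofReal ((m₁:ℝ) / ((t * m₁ + (t - 1) * m₂ : ℕ) : ℝ))
        = (m₁ : ℝ≥0∞) / ((t * m₁ + (t - 1) * m₂ : ℕ) : ℝ≥0∞) := by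
      rw [ENNReal.ofReal_div_of_pos hNtR, ENNReal.ofReal_natCast, ENNReal.ofReal_natCast]
    have hcoef₂ : ENNReal.ofReal ((m₂:ℝ) / ((t * m₁ + (t - 1) * m₂ : ℕ) : ℝ))
        = (m₂ : ℝ≥0∞) / ((t * m₁ + (t - 1) * m₂ : ℕ) : ℝ≥0∞) := by
      rw [ENNReal.ofReal_div_of_pos hNtR, ENNReal.ofReal_natCast, ENNReal.ofReal_natCast]
    have hcvx := bcrt_fin_convex d hconv P₀ (Sum.elim Pbias Phat)
        ((Finset.Icc 1 t).disjSum (Finset.Icc 1 (t-1)))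
        (Sum.elim (fun _ => (m₁:ℝ) / ((t * m₁ + (t - 1) * m₂ : ℕ) : ℝ))
                   (fun _ => (m₂:ℝ) / ((t * m₁ + (t - 1) * m₂ : ℕ) : ℝ)))
        (by
          intro i hi
          rcases i with j | j
          · exact div_nonneg (Nat.cast_nonneg _) hNtR.le
          · exact div_nonneg (Nat.cast_nonneg _) hNtR.le)
        (by
          rw [Finset.sum_disjSum]
          simp only [Sum.elim_inl, Sum.elim_inr, Finset.sum_const, Nat.card_Icc,
            nsmul_eq_mul]
          have hc1 : (t + 1 - 1 : ℕ) = t := by omega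
          rw [hc1]
          have hc2 : ((t - 1 + 1 - 1 : ℕ) : ℝ) = (t:ℝ) - 1 := by
            rw [show (t - 1 + 1 - 1 : ℕ) = t - 1 by omega, hcastt1]
          rw [hc2]
          have hpos' : (0:ℝ) < (t:ℝ) * m₁ + ((t:ℝ) - 1) * m₂ := by
            rw [← hNtcast]; exact hNtR
          rw [hNtcast]
          field_simp [hpos'.ne'])
    rw [Finset.sum_disjSum, Finset.sum_disjSum] at hcvx
    simp only [Sum.elim_inl, Sum.elim_inr] at hcvx
    have hQ2 : Q t = (∑ j ∈ Finset.Icc 1 t,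
          ENNReal.ofReal ((m₁:ℝ) / ((t * m₁ + (t - 1) * m₂ : ℕ) : ℝ)) • Pbias j)
        + ∑ j ∈ Finset.Icc 1 (t-1),
          ENNReal.ofReal ((m₂:ℝ) / ((t * m₁ + (t - 1) * m₂ : ℕ) : ℝ)) • Phat j := by
      rw [hQ t ht]
      congr 1
      · exact Finset.sum_congr rfl (fun j _ => by rw [hcoef₁])
      · exact Finset.sum_congr rfl (fun j _ => by rw [hcoef₂])
    calc d (Phat t) P₀ ≤ d (Phat t) (Q t) + d (Q t) P₀ := htri _ _ _
      _ ≤ M * ((t * m₁ + (t - 1) * m₂ : ℕ) : ℝ) ^ (-p) + d P₀ (Q t) := by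
          rw [hsymm (Q t) P₀]
          exact add_le_add_left (hest t ht) _
      _ ≤ _ := by
          apply add_le_add_right
          rw [hQ2]
          exact hcvx
  -- main induction
  have main : ∀ t : ℕ, 1 ≤ t → d (Phat t) P₀ ≤ C * (t:ℝ) ^ (-r) := by
    intro t
    induction t using Nat.strong_induction_on with
    | _ t IH =>
    intro ht
    have ht0 : (0:ℝ) < (t:ℝ) := by exact_mod_cast ht
    have ht1 : (1:ℝ) ≤ (t:ℝ) := by exact_mod_cast ht
    have htneg : (0:ℝ) < (t:ℝ) ^ (-r) := Real.rpow_pos_of_pos ht0 _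
    have hinv : (t:ℝ) ^ r * (t:ℝ) ^ (-r) = 1 := by
      rw [← Real.rpow_add ht0]; simp
    by_cases hcase : t < N
    · -- small t : use C₁
      have hmem : t ∈ Finset.range N := Finset.mem_range.mpr hcase
      have h1 : d (Phat t) P₀ * (t:ℝ) ^ r ≤ C₁ := by
        have hs : d (Phat t) P₀ * (t:ℝ) ^ r
            ≤ ∑ j ∈ Finset.range N, d (Phat j) P₀ * (j:ℝ) ^ r :=
          Finset.single_le_sum (f := fun j => d (Phat j) P₀ * (j:ℝ) ^ r)
            (fun j _ => mul_nonneg (hnonneg _ _) (Real.rpow_nonneg (Nat.cast_nonneg j) r)) hmem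
        rw [hC₁def]
        linarith
      have heq : d (Phat t) P₀ = d (Phat t) P₀ * (t:ℝ) ^ r * (t:ℝ) ^ (-r) := by
        rw [mul_assoc, hinv, mul_one]
      rw [heq]
      calc d (Phat t) P₀ * (t:ℝ) ^ r * (t:ℝ) ^ (-r)
          ≤ C₁ * (t:ℝ) ^ (-r) := mul_le_mul_of_nonneg_right h1 htneg.le
        _ ≤ C * (t:ℝ) ^ (-r) :=
            mul_le_mul_of_nonneg_right hCC₁ htneg.le
    · push_neg at hcase  -- N ≤ t
      have hNt : (N:ℝ) ≤ (t:ℝ) := by exact_mod_cast hcase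
      -- notation
      set NtR : ℝ := ((t * m₁ + (t - 1) * m₂ : ℕ) : ℝ) with hNtRdef
      have hNt0 : 0 < t * m₁ + (t - 1) * m₂ := by
        have h1 : 1 ≤ t * m₁ := Nat.one_le_iff_ne_zero.mpr (Nat.mul_ne_zero (by omega) (by omega))
        omega
      have hNtR0 : (0:ℝ) < NtR := by rw [hNtRdef]; exact_mod_cast hNt0
      have hcastt1 : ((t - 1 : ℕ) : ℝ) = (t:ℝ) - 1 := by
        rw [Nat.cast_sub ht]; norm_num
      have hNtcast : NtR = (t:ℝ) * m₁ + ((t:ℝ) - 1) * m₂ := by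
        rw [hNtRdef]; push_cast; rw [hcastt1]
      have hNge : (t:ℝ) * m₁ ≤ NtR := by
        rw [hNtcast]
        have h0 : (0:ℝ) ≤ ((t:ℝ) - 1) * m₂ := mul_nonneg (by linarith) hm₂R.le
        linarith
      have htm : (t:ℝ) ≤ (t:ℝ) * m₁ := by
        calc (t:ℝ) = t * 1 := by ring
          _ ≤ t * m₁ := mul_le_mul_of_nonneg_left hm₁R ht0.le
      have htle : (t:ℝ) ≤ NtR := le_trans htm hNge
      have hpow' : ∀ s : ℝ, (t:ℝ) ^ (1-s) / (t:ℝ) = (t:ℝ) ^ (-s) := by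
        intro s
        rw [show (1:ℝ) - s = -s + 1 by ring, Real.rpow_add ht0, Real.rpow_one,
          mul_div_assoc, div_self ht0.ne', mul_one]
      -- T1
      have hT1 : M * NtR ^ (-p) ≤ M * (t:ℝ) ^ (-r) := by
        have h1 : NtR ^ (-p) ≤ (t:ℝ) ^ (-p) :=
          Real.rpow_le_rpow_of_nonpos ht0 htle (by linarith [hp.1])
        have h2 : (t:ℝ) ^ (-p) ≤ (t:ℝ) ^ (-r) :=
          Real.rpow_le_rpow_of_exponent_le ht1 (by linarith)
        exact mul_le_mul_of_nonneg_left (h1.trans h2) hM.le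
      -- T2
      have hT2 : (∑ j ∈ Finset.Icc 1 t, ((m₁:ℝ) / NtR) * d P₀ (Pbias j))
          ≤ (B / (1-q)) * (t:ℝ) ^ (-r) := by
        have hco : (0:ℝ) ≤ (m₁:ℝ) / NtR := div_nonneg (Nat.cast_nonneg _) hNtR0.le
        have hstep1 : (∑ j ∈ Finset.Icc 1 t, ((m₁:ℝ) / NtR) * d P₀ (Pbias j))
            ≤ ∑ j ∈ Finset.Icc 1 t, ((m₁:ℝ) / NtR * B) * (j:ℝ) ^ (-q) := by
          apply Finset.sum_le_sum
          intro j hj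
          have hj1 : 1 ≤ j := (Finset.mem_Icc.mp hj).1
          rw [mul_assoc]
          apply mul_le_mul_of_nonneg_left _ hco
          rw [hsymm]
          exact hbias j hj1
        have hstep2 : ∑ j ∈ Finset.Icc 1 t, ((m₁:ℝ) / NtR * B) * (j:ℝ) ^ (-q)
            = ((m₁:ℝ) / NtR * B) * ∑ j ∈ Finset.Icc 1 t, (j:ℝ) ^ (-q) := by
          rw [Finset.mul_sum]
        have hstep3 : ((m₁:ℝ) / NtR * B) * (∑ j ∈ Finset.Icc 1 t, (j:ℝ) ^ (-q))
            ≤ ((m₁:ℝ) / NtR * B) * ((t:ℝ) ^ (1-q) / (1-q)) := by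
          apply mul_le_mul_of_nonneg_left (bcrt_sum_rpow_le q hq.1 hq.2 t)
          positivity
        have hdivt : (m₁:ℝ) / NtR ≤ 1 / (t:ℝ) := by
          rw [div_le_div_iff₀ hNtR0 ht0]
          have e : (m₁:ℝ) * t = t * m₁ := by ring
          rw [e, one_mul]
          exact hNge
        have hstep4 : ((m₁:ℝ) / NtR * B) * ((t:ℝ) ^ (1-q) / (1-q))
            ≤ ((1:ℝ) / (t:ℝ) * B) * ((t:ℝ) ^ (1-q) / (1-q)) := by
          apply mul_le_mul_of_nonneg_right (mul_le_mul_of_nonneg_right hdivt hB.le)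
          positivity
        have hstep5 : ((1:ℝ) / (t:ℝ) * B) * ((t:ℝ) ^ (1-q) / (1-q))
            = (B / (1-q)) * ((t:ℝ) ^ (1-q) / (t:ℝ)) := by ring
        have hstep6 : (B / (1-q)) * ((t:ℝ) ^ (1-q) / (t:ℝ)) ≤ (B / (1-q)) * (t:ℝ) ^ (-r) := by
          rw [hpow' q]
          apply mul_le_mul_of_nonneg_left _ (by positivity)
          exact Real.rpow_le_rpow_of_exponent_le ht1 (by linarith)
        calc (∑ j ∈ Finset.Icc 1 t, ((m₁:ℝ) / NtR) * d P₀ (Pbias j))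
            ≤ ((m₁:ℝ) / NtR * B) * ∑ j ∈ Finset.Icc 1 t, (j:ℝ) ^ (-q) := by
              rw [← hstep2]; exact hstep1
          _ ≤ ((m₁:ℝ) / NtR * B) * ((t:ℝ) ^ (1-q) / (1-q)) := hstep3
          _ ≤ ((1:ℝ) / (t:ℝ) * B) * ((t:ℝ) ^ (1-q) / (1-q)) := hstep4
          _ = (B / (1-q)) * ((t:ℝ) ^ (1-q) / (t:ℝ)) := hstep5
          _ ≤ (B / (1-q)) * (t:ℝ) ^ (-r) := hstep6
      -- T3
      have hT3 : (∑ j ∈ Finset.Icc 1 (t-1), ((m₂:ℝ) / NtR) * d P₀ (Phat j))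
          ≤ θ * C * (t:ℝ) ^ (-r) := by
        have hco : (0:ℝ) ≤ (m₂:ℝ) / NtR := div_nonneg (Nat.cast_nonneg _) hNtR0.le
        have hstep1 : (∑ j ∈ Finset.Icc 1 (t-1), ((m₂:ℝ) / NtR) * d P₀ (Phat j))
            ≤ ∑ j ∈ Finset.Icc 1 (t-1), ((m₂:ℝ) / NtR * C) * (j:ℝ) ^ (-r) := by
          apply Finset.sum_le_sum
          intro j hj
          obtain ⟨hj1, hj2⟩ := Finset.mem_Icc.mp hj
          have hjt : j < t := by omega
          rw [mul_assoc]
          apply mul_le_mul_of_nonneg_left _ hco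
          rw [hsymm]
          exact IH j hjt hj1
        have hstep2 : ∑ j ∈ Finset.Icc 1 (t-1), ((m₂:ℝ) / NtR * C) * (j:ℝ) ^ (-r)
            = ((m₂:ℝ) / NtR * C) * ∑ j ∈ Finset.Icc 1 (t-1), (j:ℝ) ^ (-r) := by
          rw [Finset.mul_sum]
        have hsum1 : ∑ j ∈ Finset.Icc 1 (t-1), (j:ℝ) ^ (-r)
            ≤ (t:ℝ) ^ (1-r) / (1-r) := by
          refine (bcrt_sum_rpow_le r hr0 hr1 (t-1)).trans ?_
          gcongr
          exact Nat.sub_le t 1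
        have hNge2 : (t:ℝ) * D ≤ NtR := by
          have h' : (m₂:ℝ) ≤ (t:ℝ) * m₂ / N := by
            rw [le_div_iff₀ hN0R]
            calc (m₂:ℝ) * N ≤ m₂ * t := mul_le_mul_of_nonneg_left hNt hm₂R.le
              _ = t * m₂ := by ring
          rw [hNtcast, hDdef]
          have e : (t:ℝ) * ((m₁:ℝ) + m₂ - m₂ / N)
              = t * m₁ + t * m₂ - t * m₂ / N := by ring
          rw [e]
          linarith [h']
        have ht1r : (t:ℝ) ^ ((1:ℝ)-r) = (t:ℝ) * (t:ℝ) ^ (-r) := by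
          rw [show (1:ℝ) - r = 1 + -r by ring, Real.rpow_add ht0, Real.rpow_one]
        have hfrac : (m₂:ℝ) * t / ((1-r) * NtR) ≤ θ := by
          rw [hθdef, div_le_div_iff₀ (by positivity) (by positivity)]
          calc (m₂:ℝ) * t * ((1-r) * D) = ((m₂:ℝ) * (1-r)) * ((t:ℝ) * D) := by ring
            _ ≤ ((m₂:ℝ) * (1-r)) * NtR := by
                apply mul_le_mul_of_nonneg_left hNge2
                positivity
            _ = m₂ * ((1-r) * NtR) := by ring
        have hkey : (m₂:ℝ) / NtR * ((t:ℝ) ^ ((1:ℝ)-r) / (1-r)) ≤ θ * (t:ℝ) ^ (-r) := by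
          have e : (m₂:ℝ) / NtR * ((t:ℝ) ^ ((1:ℝ)-r) / (1-r))
              = ((m₂:ℝ) * t / ((1-r) * NtR)) * (t:ℝ) ^ (-r) := by
            rw [ht1r]
            field_simp
          rw [e]
          exact mul_le_mul_of_nonneg_right hfrac htneg.le
        calc (∑ j ∈ Finset.Icc 1 (t-1), ((m₂:ℝ) / NtR) * d P₀ (Phat j))
            ≤ ((m₂:ℝ) / NtR * C) * ∑ j ∈ Finset.Icc 1 (t-1), (j:ℝ) ^ (-r) := by
              rw [← hstep2]; exact hstep1
          _ ≤ ((m₂:ℝ) / NtR * C) * ((t:ℝ) ^ ((1:ℝ)-r) / (1-r)) :=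
              mul_le_mul_of_nonneg_left hsum1 (mul_nonneg hco hC0.le)
          _ = C * ((m₂:ℝ) / NtR * ((t:ℝ) ^ ((1:ℝ)-r) / (1-r))) := by ring
          _ ≤ C * (θ * (t:ℝ) ^ (-r)) := mul_le_mul_of_nonneg_left hkey hC0.le
          _ = θ * C * (t:ℝ) ^ (-r) := by ring
      -- assemble
      have hKC : K₀ + θ * C ≤ C := by
        have h1θ : 0 < 1 - θ := by linarith
        have hK' : K₀ ≤ (1 - θ) * C := by
          rw [div_le_iff₀ h1θ] at hCK
          linarith
        linarith
      have hfinal : M * (t:ℝ) ^ (-r) + ((B / (1-q)) * (t:ℝ) ^ (-r) + θ * C * (t:ℝ) ^ (-r))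
          ≤ C * (t:ℝ) ^ (-r) := by
        calc M * (t:ℝ) ^ (-r) + ((B / (1-q)) * (t:ℝ) ^ (-r) + θ * C * (t:ℝ) ^ (-r))
            = (K₀ + θ * C) * (t:ℝ) ^ (-r) := by rw [hK₀def]; ring
          _ ≤ C * (t:ℝ) ^ (-r) := mul_le_mul_of_nonneg_right hKC htneg.le
      exact (hrec t ht).trans (le_trans (add_le_add hT1 (add_le_add hT2 hT3)) hfinal)
  intro t ht
  exact main t ht
end

section
/- Let α ∈ (0,1) and p > α. Then sup over t ≥ 2 of t^{α} · (1/t) ∑_{j=1}^{t-2} j^{-p} ∏_{k=j}^{t-2} (1 + (1-α)/k) is finite. -/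
open Finset

private lemma log_step (m : ℕ) (hm : 1 ≤ m) :
    1 / ((m : ℝ) + 1) ≤ Real.log ((m : ℝ) + 1) - Real.log m := by
  have hm0 : (0:ℝ) < m := by exact_mod_cast hm
  have hm1 : (0:ℝ) < (m:ℝ) + 1 := by linarith
  have hdiv : (0:ℝ) < ((m:ℝ)+1)/m := by positivity
  have h1 : (m:ℝ)/((m:ℝ)+1) ≤ Real.exp (-(1/((m:ℝ)+1))) := by
    have := Real.add_one_le_exp (-(1/((m:ℝ)+1)))
    have : 1 - 1/((m:ℝ)+1) ≤ Real.exp (-(1/((m:ℝ)+1))) := by linarith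
    have heq : (m:ℝ)/((m:ℝ)+1) = 1 - 1/((m:ℝ)+1) := by field_simp; ring
    linarith [heq ▸ this]
  have h2 : Real.exp (1/((m:ℝ)+1)) ≤ ((m:ℝ)+1)/m := by
    have hE : (0:ℝ) < Real.exp (1/((m:ℝ)+1)) := Real.exp_pos _
    rw [Real.exp_neg] at h1
    have h3 := mul_le_mul_of_nonneg_left h1 hE.le
    rw [mul_inv_cancel₀ (ne_of_gt hE)] at h3
    rw [le_div_iff₀ hm0]
    have h4 : Real.exp (1/((m:ℝ)+1)) * ((m:ℝ)/((m:ℝ)+1)) =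
        Real.exp (1/((m:ℝ)+1)) * (m:ℝ) / ((m:ℝ)+1) := by ring
    rw [h4, div_le_one hm1] at h3
    linarith
  have := (Real.le_log_iff_exp_le hdiv).mpr h2
  rwa [Real.log_div (by linarith) (ne_of_gt hm0)] at this

private lemma harmonic_bound (j : ℕ) (hj : 1 ≤ j) :
    ∀ m : ℕ, j ≤ m → ∑ k ∈ Finset.Icc j m, (1 / (k : ℝ)) ≤
      1 + Real.log m - Real.log j := by
  intro m
  induction m with
  | zero => intro h; omega
  | succ n ih =>
    intro h
    rcases Nat.lt_or_ge n j with hlt | hge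
    · -- j = n+1
      have hj' : j = n + 1 := by omega
      subst hj'
      simp only [Finset.Icc_self, Finset.sum_singleton]
      have hn0 : (0:ℝ) ≤ (n:ℝ) := Nat.cast_nonneg n
      have : (1:ℝ) ≤ (n:ℝ)+1 := by linarith
      have h1 : 1 / ((n:ℝ)+1) ≤ 1 := by
        rw [div_le_one (by linarith)]; linarith
      push_cast
      linarith
    · have hsum := Finset.sum_Icc_succ_top (by omega : j ≤ n + 1)
        (fun k => (1 / (k : ℝ)))
      rw [hsum]
      have h1 := ih hge
      have h2 := log_step n (le_trans hj hge)
      push_cast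
      push_cast at h1 h2
      linarith

theorem crt_key_uniform_bound (α p : ℝ) (hα : α ∈ Set.Ioo (0:ℝ) 1) (hp : α < p) :
    ∃ C : ℝ, ∀ t : ℕ, 2 ≤ t →
      (t : ℝ) ^ α * ((1 / (t : ℝ)) * ∑ j ∈ Finset.Icc 1 (t - 2),
        (j : ℝ) ^ (-p) * ∏ k ∈ Finset.Icc j (t - 2), (1 + (1 - α) / (k : ℝ))) ≤ C := by
  obtain ⟨hα0, hα1⟩ := hα
  set β : ℝ := 1 - α with hβ
  have hβ0 : 0 < β := by simp [hβ]; linarith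
  have hβ1 : β < 1 := by simp [hβ]; linarith
  -- summability of j ^ (-(p+β))
  have hsummable : Summable (fun n : ℕ => (n : ℝ) ^ (-(p + β))) := by
    apply (Real.summable_nat_rpow (p := -(p+β))).mpr
    simp [hβ]; linarith
  set Z : ℝ := ∑' n : ℕ, (n : ℝ) ^ (-(p + β)) with hZ
  have hZ0 : 0 ≤ Z := tsum_nonneg (fun n => Real.rpow_nonneg (Nat.cast_nonneg n) _)
  refine ⟨Real.exp β * Z, ?_⟩
  intro t ht
  set m : ℕ := t - 2 with hm
  have htpos : (0:ℝ) < t := by positivity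
  -- step 1: termwise bound
  have hterm : ∀ j ∈ Finset.Icc 1 m,
      (j : ℝ) ^ (-p) * ∏ k ∈ Finset.Icc j m, (1 + β / (k : ℝ))
        ≤ Real.exp β * (m:ℝ) ^ β * (j:ℝ) ^ (-(p + β)) := by
    intro j hjmem
    obtain ⟨hj1, hjm⟩ := Finset.mem_Icc.mp hjmem
    have hj0 : (0:ℝ) < j := by exact_mod_cast hj1
    have hm0 : (0:ℝ) < m := by
      have : 1 ≤ m := le_trans hj1 hjm
      exact_mod_cast this
    -- product ≤ exp (β * sum 1/k)
    have hprod1 : ∏ k ∈ Finset.Icc j m, (1 + β / (k : ℝ))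
        ≤ Real.exp (β * ∑ k ∈ Finset.Icc j m, (1 / (k:ℝ))) := by
      rw [Finset.mul_sum, Real.exp_sum]
      apply Finset.prod_le_prod
      · intro k hk
        have hk1 : 1 ≤ k := le_trans hj1 (Finset.mem_Icc.mp hk).1
        have hk0 : (0:ℝ) < k := by exact_mod_cast hk1
        positivity
      · intro k hk
        have := Real.add_one_le_exp (β * (1 / (k:ℝ)))
        calc 1 + β / (k:ℝ) = β * (1 / (k:ℝ)) + 1 := by ring
          _ ≤ Real.exp (β * (1 / (k:ℝ))) := Real.add_one_le_exp _
    have hsum := harmonic_bound j hj1 m hjm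
    have hprod2 : ∏ k ∈ Finset.Icc j m, (1 + β / (k : ℝ))
        ≤ Real.exp (β * (1 + Real.log m - Real.log j)) := by
      refine le_trans hprod1 (Real.exp_le_exp.mpr ?_)
      exact mul_le_mul_of_nonneg_left hsum (le_of_lt hβ0)
    have hexp : Real.exp (β * (1 + Real.log m - Real.log j))
        = Real.exp β * (m:ℝ) ^ β * (j:ℝ) ^ (-β) := by
      rw [Real.rpow_def_of_pos hm0, Real.rpow_def_of_pos hj0, ← Real.exp_add,
        ← Real.exp_add]
      ring_nf
    have hjpow : (j:ℝ) ^ (-p) * (j:ℝ) ^ (-β) = (j:ℝ) ^ (-(p+β)) := by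
      rw [← Real.rpow_add hj0]; ring_nf
    calc (j : ℝ) ^ (-p) * ∏ k ∈ Finset.Icc j m, (1 + β / (k : ℝ))
        ≤ (j : ℝ) ^ (-p) * (Real.exp β * (m:ℝ) ^ β * (j:ℝ) ^ (-β)) := by
          apply mul_le_mul_of_nonneg_left _ (Real.rpow_nonneg (le_of_lt hj0) _)
          rw [← hexp]; exact hprod2
      _ = Real.exp β * (m:ℝ) ^ β * ((j : ℝ) ^ (-p) * (j:ℝ) ^ (-β)) := by ring
      _ = Real.exp β * (m:ℝ) ^ β * (j:ℝ) ^ (-(p+β)) := by rw [hjpow]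
  -- step 2: sum bound
  have hsum2 : ∑ j ∈ Finset.Icc 1 m, (j : ℝ) ^ (-p) *
      ∏ k ∈ Finset.Icc j m, (1 + β / (k : ℝ))
      ≤ Real.exp β * (m:ℝ) ^ β * Z := by
    calc ∑ j ∈ Finset.Icc 1 m, (j : ℝ) ^ (-p) *
          ∏ k ∈ Finset.Icc j m, (1 + β / (k : ℝ))
        ≤ ∑ j ∈ Finset.Icc 1 m, Real.exp β * (m:ℝ) ^ β * (j:ℝ) ^ (-(p+β)) :=
          Finset.sum_le_sum hterm
      _ = Real.exp β * (m:ℝ) ^ β * ∑ j ∈ Finset.Icc 1 m, (j:ℝ) ^ (-(p+β)) := by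
          rw [Finset.mul_sum]
      _ ≤ Real.exp β * (m:ℝ) ^ β * Z := by
          apply mul_le_mul_of_nonneg_left _ (by positivity)
          exact Summable.sum_le_tsum _ (fun n _ => Real.rpow_nonneg (Nat.cast_nonneg n) _)
            hsummable
  -- step 3: combine
  have hmle : (m:ℝ) ≤ (t:ℝ) := by
    have : m ≤ t := Nat.sub_le t 2
    exact_mod_cast this
  have hmpow : (m:ℝ) ^ β ≤ (t:ℝ) ^ β :=
    Real.rpow_le_rpow (Nat.cast_nonneg m) hmle (le_of_lt hβ0)
  have hpow1 : (t:ℝ) ^ α * (t:ℝ) ^ β = (t:ℝ) := by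
    rw [← Real.rpow_add htpos]
    simp [hβ]
  calc (t : ℝ) ^ α * ((1 / (t : ℝ)) * ∑ j ∈ Finset.Icc 1 m,
        (j : ℝ) ^ (-p) * ∏ k ∈ Finset.Icc j m, (1 + β / (k : ℝ)))
      ≤ (t : ℝ) ^ α * ((1 / (t : ℝ)) * (Real.exp β * (m:ℝ) ^ β * Z)) := by
        apply mul_le_mul_of_nonneg_left _ (Real.rpow_nonneg htpos.le _)
        exact mul_le_mul_of_nonneg_left hsum2 (by positivity)
    _ ≤ (t : ℝ) ^ α * ((1 / (t : ℝ)) * (Real.exp β * (t:ℝ) ^ β * Z)) := by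
        apply mul_le_mul_of_nonneg_left _ (Real.rpow_nonneg htpos.le _)
        apply mul_le_mul_of_nonneg_left _ (by positivity)
        exact mul_le_mul_of_nonneg_right
          (mul_le_mul_of_nonneg_left hmpow (Real.exp_nonneg β)) hZ0
    _ = Real.exp β * Z * ((t:ℝ) ^ α * (t:ℝ) ^ β / (t:ℝ)) := by ring
    _ = Real.exp β * Z := by rw [hpow1]; field_simp
end
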